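/- Let X be a pre-Riesz space with dim X = n < ∞. Then the set of all band projections on X is finite and its cardinality equals 2^m for some natural number m with 0 ≤ m ≤ n. -/

import Mathlib

/-!
Disjointness is handled without a Riesz completion: for finite sets, `upperBounds T ⊆
upperBounds S` plays the role of `sup S ≤ sup T`, and the pre-Riesz property yields the
cancellation of a finite summand in this comparison. In this calculus `x ⊥ y` becomes
`|x| ∨ |y| = |x| + |y|`, from which disjoint complements are solid and closed under addition.
These two facts make band projections commute and make `0`, `1 - P` and `P * Q` band projections,
so the band projections form a Boolean algebra of commuting idempotents. In finite dimension such
a family is atomic, its atoms are pairwise orthogonal nonzero projections, hence at most `dim X`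
of them, and each member is the sum of the atoms below it: it has `2 ^ m` elements, `m ≤ dim X`.
-/

open Pointwise

variable {X : Type*} [AddCommGroup X] [PartialOrder X] [IsOrderedAddMonoid X] [Module ℝ X] [PosSMulStrictMono ℝ X]

/-- Two elements of an ordered vector space are disjoint if the sets `{x+y, -x-y}` and
`{x-y, y-x}` have the same set of upper bounds. -/
def UDisjoint (x y : X) : Prop :=
  upperBounds ({x + y, -x - y} : Set X) = upperBounds ({x - y, y - x} : Set X)

/-- The disjoint complement `S^⊥` of a set `S`. -/
def dComp (S : Set X) : Set X := {x : X | ∀ s ∈ S, UDisjoint x s}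

/-- A band: a set equal to its double disjoint complement. -/
def IsBand (B : Set X) : Prop := B = dComp (dComp B)

/-- A projection band: a band `B` with `B ∩ B^⊥ = {0}` and `B + B^⊥ = X`. -/
def IsProjBand (B : Set X) : Prop :=
  IsBand B ∧ B ∩ dComp B = {0} ∧ ∀ x : X, ∃ b ∈ B, ∃ c ∈ dComp B, x = b + c

/-- A positive linear operator. -/
def IsPosMap (T : X →ₗ[ℝ] X) : Prop := ∀ x : X, 0 ≤ x → 0 ≤ T x

/-- A band projection: a linear projection whose range is a projection band and whose
kernel is the disjoint complement of the range. -/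
def IsBandProj (P : X →ₗ[ℝ] X) : Prop :=
  P ∘ₗ P = P ∧ IsProjBand (Set.range ⇑P) ∧ (LinearMap.ker P : Set X) = dComp (Set.range ⇑P)

/-- A pre-Riesz space: for every nonempty finite `A ⊆ X` and every `x`, if the upper bounds
of `x + A` are contained in the upper bounds of `A`, then `x ≥ 0`. -/
def IsPreRiesz (X : Type*) [AddCommGroup X] [PartialOrder X] [IsOrderedAddMonoid X] [Module ℝ X] [PosSMulStrictMono ℝ X] : Prop :=
  ∀ (A : Set X) (x : X), A.Finite → A.Nonempty →
    upperBounds ((x + ·) '' A) ⊆ upperBounds A → 0 ≤ x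

section UpperBounds

/-- `{x, -x}`: its least upper bound, where it exists, is `|x|`. -/
def pmSet {α : Type*} [Neg α] (x : α) : Set α := {x, -x}

theorem pmSet_finite {α : Type*} [Neg α] (x : α) : (pmSet x).Finite :=
  (Set.finite_singleton _).insert _

theorem pmSet_nonempty {α : Type*} [Neg α] (x : α) : (pmSet x).Nonempty :=
  Set.insert_nonempty _ _

theorem mem_upperBounds_pmSet {α : Type*} [Preorder α] [Neg α] {x v : α} :
    v ∈ upperBounds (pmSet x) ↔ x ≤ v ∧ -x ≤ v := by
  simp [pmSet, upperBounds_insert]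

theorem pmSet_add_pmSet {G : Type*} [AddCommGroup G] (x y : G) :
    pmSet x + pmSet y = pmSet (x + y) ∪ pmSet (x - y) := by
  ext v
  simp only [pmSet, Set.mem_add, Set.mem_union, Set.mem_insert_iff, Set.mem_singleton_iff,
    or_assoc, exists_eq_or_imp, exists_eq_left]
  constructor
  · rintro (h | h | h | h) <;> subst h <;> abel_nf <;> simp
  · rintro (h | h | h | h) <;> subst h <;> abel_nf <;> simp

theorem pmSet_add_add_pmSet_sub {G : Type*} [AddCommGroup G] (x y : G) :
    pmSet (x + y) + pmSet (x - y) = (fun a => a + a) '' (pmSet x ∪ pmSet y) := by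
  ext v
  simp only [pmSet, Set.mem_add, Set.mem_image, Set.mem_union, Set.mem_insert_iff,
    Set.mem_singleton_iff, or_assoc, exists_eq_or_imp, exists_eq_left]
  constructor
  · rintro (h | h | h | h) <;> subst h <;> abel_nf <;> simp
  · rintro (h | h | h | h) <;> subst h <;> abel_nf <;> simp

variable {G : Type*} [AddCommGroup G] [PartialOrder G] [IsOrderedAddMonoid G]

theorem upperBounds_add_subset_add {S T : Set G} (h : upperBounds T ⊆ upperBounds S) (U : Set G) :
    upperBounds (T + U) ⊆ upperBounds (S + U) := by
  rintro v hv _ ⟨s, hs, u, hu, rfl⟩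
  have hvu : v - u ∈ upperBounds T := fun t ht =>
    le_sub_iff_add_le.mpr (hv ⟨t, ht, u, hu, rfl⟩)
  exact le_sub_iff_add_le.mp (h hvu hs)

theorem upperBounds_add_eq_add {S T : Set G} (h : upperBounds T = upperBounds S) (U : Set G) :
    upperBounds (T + U) = upperBounds (S + U) :=
  (upperBounds_add_subset_add h.subset U).antisymm (upperBounds_add_subset_add h.superset U)

end UpperBounds

section OrderedModule

variable {E : Type*} [AddCommGroup E] [PartialOrder E] [Module ℝ E] [PosSMulStrictMono ℝ E]

theorem add_self_le_add_self_iff {a v : E} : a + a ≤ v + v ↔ a ≤ v := by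
  simp only [← two_smul ℝ]
  exact smul_le_smul_iff_of_pos_left two_pos

theorem add_self_mem_upperBounds_image_iff {S : Set E} {v : E} :
    v + v ∈ upperBounds ((fun a => a + a) '' S) ↔ v ∈ upperBounds S := by
  simp only [mem_upperBounds, Set.forall_mem_image, add_self_le_add_self_iff]

end OrderedModule

namespace IsPreRiesz

theorem nonneg_of_le_of_neg_le (hX : IsPreRiesz X) {t v : X} (h : t ≤ v) (h' : -t ≤ v) :
    0 ≤ v := by
  set s := (⅟2 : ℝ) • t
  have hs : t = s + s := (invOf_two_smul_add_invOf_two_smul ℝ t).symm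
  refine hX (pmSet s) v (pmSet_finite s) (pmSet_nonempty s) fun w hw => ?_
  have h₁ : v + s ≤ w := hw ⟨s, Set.mem_insert _ _, rfl⟩
  have h₂ : v + -s ≤ w := hw ⟨-s, Set.mem_insert_of_mem _ rfl, rfl⟩
  refine mem_upperBounds_pmSet.mpr ⟨?_, ?_⟩
  · calc s = t + -s := by rw [hs]; abel
      _ ≤ v + -s := by gcongr
      _ ≤ w := h₂
  · calc -s = -t + s := by rw [hs]; abel
      _ ≤ v + s := by gcongr
      _ ≤ w := h₁

theorem upperBounds_subset_of_add (hX : IsPreRiesz X) {S T E : Set X} (hS : S.Finite)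
    (hS' : S.Nonempty) (hE : E.Finite) (hE' : E.Nonempty)
    (h : upperBounds (T + E) ⊆ upperBounds (S + E)) : upperBounds T ⊆ upperBounds S := by
  intro u hu s hs
  refine sub_nonneg.mp <| hX (S + E) (u - s) (hS.add hE) (hS'.add hE') fun v hv => h ?_
  rintro _ ⟨t, ht, e, he, rfl⟩
  calc t + e ≤ u + e := by gcongr; exact hu ht
    _ = (u - s) + (s + e) := by abel
    _ ≤ v := hv ⟨s + e, Set.add_mem_add hs he, rfl⟩

theorem upperBounds_add_pmSet_subset (hX : IsPreRiesz X) (S : Set X) (t : X) :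
    upperBounds (S + pmSet t) ⊆ upperBounds S := by
  intro v hv s hs
  refine sub_nonneg.mp <| hX.nonneg_of_le_of_neg_le (t := t) ?_ ?_
  · exact le_sub_iff_add_le'.mpr (hv (Set.add_mem_add hs (Set.mem_insert _ _)))
  · exact le_sub_iff_add_le'.mpr (hv (Set.add_mem_add hs (Set.mem_insert_of_mem _ rfl)))

theorem upperBounds_pmSet_add_pmSet_subset_union (hX : IsPreRiesz X) (x y : X) :
    upperBounds (pmSet x + pmSet y) ⊆ upperBounds (pmSet x ∪ pmSet y) := by
  rw [upperBounds_union]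
  refine fun v hv => ⟨hX.upperBounds_add_pmSet_subset _ y hv, ?_⟩
  rw [add_comm] at hv
  exact hX.upperBounds_add_pmSet_subset _ x hv

end IsPreRiesz

section Disjoint

variable {E : Type*} [AddCommGroup E] [PartialOrder E]

theorem uDisjoint_iff_upperBounds_pmSet {x y : E} :
    UDisjoint x y ↔ upperBounds (pmSet (x + y)) = upperBounds (pmSet (x - y)) := by
  simp only [UDisjoint, pmSet, neg_add', neg_sub]

namespace UDisjoint

theorem symm {x y : E} (h : UDisjoint x y) : UDisjoint y x := by
  rw [UDisjoint] at h ⊢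
  rwa [add_comm y, show -y - x = -x - y by abel, Set.pair_comm (y - x)]

theorem neg_right {x y : E} (h : UDisjoint x y) : UDisjoint x (-y) := by
  rw [uDisjoint_iff_upperBounds_pmSet] at h ⊢
  rw [← sub_eq_add_neg, sub_neg_eq_add, h]

theorem eq_zero_of_self [IsOrderedAddMonoid E] [Module ℝ E] {x : E} (h : UDisjoint x x) :
    x = 0 := by
  rw [uDisjoint_iff_upperBounds_pmSet, sub_self] at h
  have h₀ : (0 : E) ∈ upperBounds (pmSet (x + x)) := by
    rw [h, mem_upperBounds_pmSet, neg_zero]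
    exact ⟨le_rfl, le_rfl⟩
  obtain ⟨h₁, h₂⟩ := mem_upperBounds_pmSet.mp h₀
  have h₃ : (2 : ℝ) • x = 0 := by rw [two_smul]; exact le_antisymm h₁ (neg_nonpos.mp h₂)
  exact (smul_eq_zero.mp h₃).resolve_left two_ne_zero

end UDisjoint

theorem uDisjoint_zero_right (x : E) : UDisjoint x 0 := by
  rw [UDisjoint]
  simp

end Disjoint

namespace IsPreRiesz

/-- Disjointness as `|x| ∨ |y| = |x| + |y|`. -/
theorem uDisjoint_iff_upperBounds_union (hX : IsPreRiesz X) {x y : X} :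
    UDisjoint x y ↔ upperBounds (pmSet x ∪ pmSet y) ⊆ upperBounds (pmSet x + pmSet y) := by
  set U := pmSet (x + y)
  set W := pmSet (x - y)
  have hdouble : ∀ v, v + v ∈ upperBounds (U + W) ↔ v ∈ upperBounds (pmSet x ∪ pmSet y) :=
    fun v => by rw [pmSet_add_add_pmSet_sub, add_self_mem_upperBounds_image_iff]
  rw [uDisjoint_iff_upperBounds_pmSet, pmSet_add_pmSet]
  constructor
  · intro h v hv
    have hUU : v + v ∈ upperBounds (U + U) := by
      have hUW := (hdouble v).mpr hv
      rwa [add_comm, ← upperBounds_add_eq_add h] at hUW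
    have hdiag : (fun a => a + a) '' U ⊆ U + U := fun _ ⟨a, ha, e⟩ => ⟨a, ha, a, ha, e⟩
    have hvU : v ∈ upperBounds U :=
      add_self_mem_upperBounds_image_iff.mp (upperBounds_mono_set hdiag hUU)
    rw [upperBounds_union]
    exact ⟨hvU, h ▸ hvU⟩
  · intro h
    have key : ∀ v ∈ upperBounds (U + W),
        v ∈ upperBounds (U + U) ∧ v ∈ upperBounds (W + W) := by
      intro v hv
      rw [← invOf_two_smul_add_invOf_two_smul ℝ v] at hv ⊢
      have hUW := h ((hdouble _).mp hv)
      rw [upperBounds_union] at hUW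
      obtain ⟨hU, hW⟩ := hUW
      exact ⟨add_mem_upperBounds_add hU hU, add_mem_upperBounds_add hW hW⟩
    refine Set.Subset.antisymm ?_ ?_
    · exact hX.upperBounds_subset_of_add (E := W) (pmSet_finite _) (pmSet_nonempty _)
        (pmSet_finite _) (pmSet_nonempty _) fun v hv => (key v hv).2
    · exact hX.upperBounds_subset_of_add (E := U) (pmSet_finite _) (pmSet_nonempty _)
        (pmSet_finite _) (pmSet_nonempty _) fun v hv => (key v (by rwa [add_comm])).1

theorem upperBounds_pmSet_add_subset (hX : IsPreRiesz X) {p q : X} (h : UDisjoint p q) :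
    upperBounds (pmSet (p + q)) ⊆ upperBounds (pmSet p) := by
  intro v hv
  have hv' : v ∈ upperBounds (pmSet (p + q) ∪ pmSet (p - q)) := by
    rw [upperBounds_union]
    exact ⟨hv, uDisjoint_iff_upperBounds_pmSet.mp h ▸ hv⟩
  rw [← pmSet_add_pmSet] at hv'
  exact hX.upperBounds_add_pmSet_subset _ q hv'

/-- Solidity of disjoint complements: `|w| ≤ e` and `e ⊥ |x|` give `w ⊥ x`. -/
theorem uDisjoint_of_upperBounds_subset (hX : IsPreRiesz X) {E : Set X} (hE : E.Finite) {x w : X}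
    (hxE : upperBounds (E ∪ pmSet x) ⊆ upperBounds (E + pmSet x))
    (hwE : upperBounds E ⊆ upperBounds (pmSet w)) : UDisjoint w x := by
  set A := pmSet x
  set W := pmSet w
  rw [hX.uDisjoint_iff_upperBounds_union]
  refine hX.upperBounds_subset_of_add ((pmSet_finite w).add (pmSet_finite x))
    ((pmSet_nonempty w).add (pmSet_nonempty x)) (hE.union (pmSet_finite x))
    ((pmSet_nonempty x).mono Set.subset_union_right) fun v hv => ?_
  have hv' : v ∈ upperBounds ((W ∪ A) + (E + A)) := by
    rw [add_comm] at hv ⊢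
    exact upperBounds_add_subset_add hxE _ hv
  rw [Set.union_add, upperBounds_union] at hv'
  rw [Set.add_union, upperBounds_union]
  refine ⟨by rw [add_assoc, add_comm A]; exact hv'.1, ?_⟩
  have hAA := upperBounds_add_subset_add hwE (A + A) (by rw [← add_left_comm]; exact hv'.2)
  rwa [← add_assoc] at hAA

end IsPreRiesz

namespace UDisjoint

theorem add_right (hX : IsPreRiesz X) {x y z : X} (hy : UDisjoint x y) (hz : UDisjoint x z) :
    UDisjoint x (y + z) := by
  set A := pmSet x
  set B := pmSet y
  set C := pmSet z
  -- first `|x| ⊥ |y| + |z|`, then solidity with `|y + z| ≤ |y| + |z|`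
  have hBC : upperBounds ((B + C) ∪ A) ⊆ upperBounds ((B + C) + A) := by
    intro v hv
    rw [upperBounds_union] at hv
    obtain ⟨hvBC, hvA⟩ := hv
    have hvC : v ∈ upperBounds C := hX.upperBounds_add_pmSet_subset C y (by rwa [add_comm])
    have hvAC : v ∈ upperBounds (A + C) := hX.uDisjoint_iff_upperBounds_union.mp hz <| by
      rw [upperBounds_union]
      exact ⟨hvA, hvC⟩
    have hvABC : v ∈ upperBounds ((A ∪ B) + C) := by
      rw [Set.union_add, upperBounds_union]
      exact ⟨hvAC, hvBC⟩
    have := upperBounds_add_subset_add (hX.uDisjoint_iff_upperBounds_union.mp hy) C hvABC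
    rwa [add_comm (B + C), ← add_assoc]
  have hsub : pmSet (y + z) ⊆ B + C := pmSet_add_pmSet y z ▸ Set.subset_union_left
  exact (hX.uDisjoint_of_upperBounds_subset ((pmSet_finite y).add (pmSet_finite z)) hBC
    (upperBounds_mono_set hsub)).symm

theorem of_add_left (hX : IsPreRiesz X) {p q z : X} (hpq : UDisjoint p q)
    (h : UDisjoint (p + q) z) : UDisjoint p z :=
  hX.uDisjoint_of_upperBounds_subset (pmSet_finite (p + q))
    (hX.uDisjoint_iff_upperBounds_union.mp h) (hX.upperBounds_pmSet_add_subset hpq)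

end UDisjoint

theorem IsIdempotentElem.apply_sub_apply_self {R M : Type*} [Ring R] [AddCommGroup M] [Module R M]
    {P : Module.End R M} (hP : IsIdempotentElem P) (x : M) : P (x - P x) = 0 := by
  rw [map_sub, ← Module.End.mul_apply, hP.eq, sub_self]

section BandProjection

variable {E : Type*} [AddCommGroup E] [PartialOrder E] [Module ℝ E]

theorem isBandProj_of_ker_eq_dComp [IsOrderedAddMonoid E] {R : E →ₗ[ℝ] E}
    (hR : IsIdempotentElem R) (hker : (LinearMap.ker R : Set E) = dComp (Set.range R))
    (hrange : Set.range R = dComp (LinearMap.ker R)) : IsBandProj R := by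
  refine ⟨hR, ⟨?_, ?_, fun x => ?_⟩, hker⟩
  · rw [IsBand, ← hker]
    exact hrange
  · ext b
    constructor
    · rintro ⟨hb, hb'⟩
      exact (hb' b hb).eq_zero_of_self
    · rintro rfl
      exact ⟨⟨0, map_zero R⟩, hker ▸ map_zero R⟩
  · refine ⟨R x, ⟨x, rfl⟩, x - R x, ?_, (add_sub_cancel _ _).symm⟩
    rw [← hker]
    exact IsIdempotentElem.apply_sub_apply_self hR x

namespace IsBandProj

variable {P : E →ₗ[ℝ] E}

theorem isIdempotentElem (hP : IsBandProj P) : IsIdempotentElem P := hP.1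

theorem apply_apply (hP : IsBandProj P) (x : E) : P (P x) = P x :=
  LinearMap.congr_fun hP.1 x

theorem apply_sub_apply_self (hP : IsBandProj P) (x : E) : P (x - P x) = 0 :=
  IsIdempotentElem.apply_sub_apply_self hP.isIdempotentElem x

theorem range_eq_dComp_ker (hP : IsBandProj P) : Set.range P = dComp (LinearMap.ker P) := by
  rw [hP.2.2]
  exact hP.2.1.1

theorem uDisjoint_of_apply_eq_zero (hP : IsBandProj P) {x : E} (hx : P x = 0) (y : E) :
    UDisjoint x (P y) := by
  have hx' : x ∈ (LinearMap.ker P : Set E) := hx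
  rw [hP.2.2] at hx'
  exact hx' _ ⟨y, rfl⟩

theorem apply_eq_zero_of_uDisjoint (hP : IsBandProj P) {x : E} (h : ∀ y, UDisjoint x (P y)) :
    P x = 0 := by
  have hx : x ∈ dComp (Set.range P) := by
    rintro _ ⟨y, rfl⟩
    exact h y
  rw [← hP.2.2] at hx
  exact hx

theorem apply_eq_self_of_uDisjoint (hP : IsBandProj P) {y : E}
    (h : ∀ z, P z = 0 → UDisjoint y z) : P y = y := by
  have hy : y ∈ Set.range P := hP.range_eq_dComp_ker ▸ h
  obtain ⟨w, rfl⟩ := hy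
  exact hP.apply_apply w

theorem zero [IsOrderedAddMonoid E] : IsBandProj (0 : E →ₗ[ℝ] E) := by
  refine isBandProj_of_ker_eq_dComp IsIdempotentElem.zero ?_ ?_
  · ext z
    refine ⟨fun _ => ?_, fun _ => rfl⟩
    rintro _ ⟨y, rfl⟩
    exact uDisjoint_zero_right z
  · ext z
    constructor
    · rintro ⟨y, rfl⟩ x -
      exact (uDisjoint_zero_right x).symm
    · intro hz
      exact ⟨z, ((hz z rfl).eq_zero_of_self).symm⟩

theorem one_sub [IsOrderedAddMonoid E] (hP : IsBandProj P) : IsBandProj (1 - P) := by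
  have hker : LinearMap.ker (1 - P) = LinearMap.range P :=
    (LinearMap.IsIdempotentElem.range_eq_ker_one_sub hP.isIdempotentElem).symm
  have hrange : LinearMap.range (1 - P) = LinearMap.ker P :=
    (LinearMap.IsIdempotentElem.ker_eq_range_one_sub hP.isIdempotentElem).symm
  refine isBandProj_of_ker_eq_dComp (IsIdempotentElem.one_sub hP.isIdempotentElem) ?_ ?_
  · rw [← LinearMap.coe_range, hker, hrange, LinearMap.coe_range]
    exact hP.range_eq_dComp_ker
  · rw [← LinearMap.coe_range, hker, hrange, LinearMap.coe_range]
    exact hP.2.2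

end IsBandProj

end BandProjection

theorem isBandProj_of_uDisjoint (hX : IsPreRiesz X) {R : X →ₗ[ℝ] X} (hR : IsIdempotentElem R)
    (h : ∀ x y, R x = 0 → UDisjoint x (R y)) : IsBandProj R := by
  have hsub := IsIdempotentElem.apply_sub_apply_self hR
  refine isBandProj_of_ker_eq_dComp hR ?_ ?_
  · ext z
    refine ⟨fun hz => ?_, fun hz => ?_⟩
    · rintro _ ⟨y, rfl⟩
      exact h z y hz
    · have h₁ : UDisjoint (R z) z := (hz _ ⟨z, rfl⟩).symm
      have h₂ : UDisjoint (R z) (-(z - R z)) := (h _ z (hsub z)).symm.neg_right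
      have h₃ := h₁.add_right hX h₂
      rw [show z + -(z - R z) = R z by abel] at h₃
      exact h₃.eq_zero_of_self
  · ext z
    refine ⟨?_, fun hz => ?_⟩
    · rintro ⟨y, rfl⟩ x hx
      exact (h x y hx).symm
    · have h₁ : UDisjoint (z - R z) z := (hz _ (hsub z)).symm
      have h₂ : UDisjoint (z - R z) (-R z) := (h _ z (hsub z)).neg_right
      have h₃ := h₁.add_right hX h₂
      rw [← sub_eq_add_neg] at h₃
      exact ⟨z, (sub_eq_zero.mp h₃.eq_zero_of_self).symm⟩

namespace IsBandProj

variable {P Q : X →ₗ[ℝ] X}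

theorem uDisjoint_apply (hX : IsPreRiesz X) (hP : IsBandProj P) {b z : X} (h : UDisjoint b z) :
    UDisjoint (P b) z :=
  (hP.uDisjoint_of_apply_eq_zero (hP.apply_sub_apply_self b) b).symm.of_add_left hX
    (by rwa [add_sub_cancel])

theorem commute (hX : IsPreRiesz X) (hP : IsBandProj P) (hQ : IsBandProj Q) : Commute P Q := by
  refine LinearMap.ext fun x => ?_
  have h₁ : P (Q (P x)) = Q (P x) := hP.apply_eq_self_of_uDisjoint fun z hz =>
    hQ.uDisjoint_apply hX (hP.uDisjoint_of_apply_eq_zero hz x).symm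
  have h₂ : P (Q (x - P x)) = 0 := hP.apply_eq_zero_of_uDisjoint fun y =>
    hQ.uDisjoint_apply hX (hP.uDisjoint_of_apply_eq_zero (hP.apply_sub_apply_self x) y)
  calc P (Q x) = P (Q (P x)) + P (Q (x - P x)) := by rw [← map_add, ← map_add, add_sub_cancel]
    _ = Q (P x) := by rw [h₁, h₂, add_zero]

theorem mul (hX : IsPreRiesz X) (hP : IsBandProj P) (hQ : IsBandProj Q) : IsBandProj (P * Q) := by
  have hPQ := hP.commute hX hQ
  refine isBandProj_of_uDisjoint hX
    (IsIdempotentElem.mul_of_commute hPQ hP.isIdempotentElem hQ.isIdempotentElem) fun x y hx => ?_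
  have h₁ : UDisjoint (x - Q x) ((P * Q) y) := by
    rw [hPQ.eq]
    exact hQ.uDisjoint_of_apply_eq_zero (hQ.apply_sub_apply_self x) (P y)
  have h₂ : UDisjoint (Q x - P (Q x)) ((P * Q) y) :=
    hP.uDisjoint_of_apply_eq_zero (hP.apply_sub_apply_self (Q x)) (Q y)
  have h₃ := (h₁.symm.add_right hX h₂.symm).symm
  rwa [sub_add_sub_cancel, show P (Q x) = 0 from hx, sub_zero] at h₃

end IsBandProj


section BooleanProjFamily

open Module

variable {K V : Type*} [DivisionRing K] [AddCommGroup V] [Module K V]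

theorem Module.End.exists_apply_eq_self_ne_zero {P : Module.End K V} (hP : IsIdempotentElem P)
    (h0 : P ≠ 0) : ∃ v, P v = v ∧ v ≠ 0 := by
  obtain ⟨x, hx⟩ := DFunLike.ne_iff.mp h0
  exact ⟨P x, LinearMap.congr_fun hP x, hx⟩

theorem Module.End.eq_of_mul_eq_of_finrank_range_le [FiniteDimensional K V]
    {P Q : Module.End K V} (hQ : IsIdempotentElem Q) (hPQ : Commute P Q) (h : P * Q = Q)
    (hr : finrank K (LinearMap.range P) ≤ finrank K (LinearMap.range Q)) : P = Q := by
  have hle : LinearMap.range Q ≤ LinearMap.range P := h ▸ LinearMap.range_comp_le_range Q P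
  have hrange := Submodule.eq_of_le_of_finrank_le hle hr
  have hQP : Q * P = P := LinearMap.ext fun x =>
    (LinearMap.IsIdempotentElem.mem_range_iff hQ).mp (hrange ▸ LinearMap.mem_range_self P x)
  rw [← hQP, ← hPQ.eq, h]

structure IsBooleanProjFamily (S : Set (Module.End K V)) : Prop where
  isIdempotentElem : ∀ P ∈ S, IsIdempotentElem P
  commute : ∀ P ∈ S, ∀ Q ∈ S, Commute P Q
  zero_mem : 0 ∈ S
  mul_mem : ∀ P ∈ S, ∀ Q ∈ S, P * Q ∈ S
  one_sub_mem : ∀ P ∈ S, 1 - P ∈ S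

/-- The atoms of `S` for the order `Q ≤ P ↔ P * Q = Q`. -/
def projAtoms (S : Set (Module.End K V)) : Set (Module.End K V) :=
  {a | a ∈ S ∧ a ≠ 0 ∧ ∀ Q ∈ S, a * Q = Q → Q = 0 ∨ Q = a}

namespace IsBooleanProjFamily

variable {S : Set (Module.End K V)}

theorem add_mem (hS : IsBooleanProjFamily S) {P Q : Module.End K V} (hP : P ∈ S) (hQ : Q ∈ S)
    (hPQ : P * Q = 0) : P + Q ∈ S := by
  have h : P + Q = 1 - (1 - P) * (1 - Q) := by
    rw [sub_mul, one_mul, mul_sub, mul_one, hPQ]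
    abel
  rw [h]
  exact hS.one_sub_mem _ (hS.mul_mem _ (hS.one_sub_mem _ hP) _ (hS.one_sub_mem _ hQ))

theorem exists_mem_projAtoms_mul_eq [FiniteDimensional K V] (hS : IsBooleanProjFamily S)
    {P : Module.End K V} (hP : P ∈ S) (hP0 : P ≠ 0) : ∃ a ∈ projAtoms S, P * a = a := by
  -- a nonzero `a ≤ P` of minimal rank is an atom
  obtain ⟨a, ⟨haS, ha0, hPa⟩, hmin⟩ := exists_minimalFor_of_wellFoundedLT
    (fun Q => Q ∈ S ∧ Q ≠ 0 ∧ P * Q = Q) (fun Q => finrank K (LinearMap.range Q))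
    ⟨P, hP, hP0, hS.isIdempotentElem P hP⟩
  refine ⟨a, ⟨haS, ha0, fun Q hQ haQ => or_iff_not_imp_left.mpr fun hQ0 => ?_⟩, hPa⟩
  have hPQ : P * Q = Q := by rw [← haQ, ← mul_assoc, hPa]
  exact (Module.End.eq_of_mul_eq_of_finrank_range_le (hS.isIdempotentElem Q hQ)
    (hS.commute a haS Q hQ) haQ (hmin ⟨hQ, hQ0, hPQ⟩ (Submodule.finrank_mono
      (haQ ▸ LinearMap.range_comp_le_range Q a)))).symm

theorem mul_eq_zero_of_mem_projAtoms (hS : IsBooleanProjFamily S) {a b : Module.End K V}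
    (ha : a ∈ projAtoms S) (hb : b ∈ projAtoms S) (hab : a ≠ b) : a * b = 0 := by
  have hmem := hS.mul_mem a ha.1 b hb.1
  have ha' : a * (a * b) = a * b := by rw [← mul_assoc, hS.isIdempotentElem a ha.1]
  have hb' : b * (a * b) = a * b := by
    rw [← mul_assoc, ← (hS.commute a ha.1 b hb.1).eq, mul_assoc, hS.isIdempotentElem b hb.1]
  rcases ha.2.2 _ hmem ha' with h | h
  · exact h
  rcases hb.2.2 _ hmem hb' with h' | h'
  · exact h'
  exact absurd (h.symm.trans h') hab

theorem sum_mul_eq_zero (hS : IsBooleanProjFamily S) {T : Finset (Module.End K V)}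
    (hT : ∀ b ∈ T, b ∈ projAtoms S) {a : Module.End K V} (ha : a ∈ projAtoms S)
    (haT : a ∉ T) : (∑ b ∈ T, b) * a = 0 := by
  rw [Finset.sum_mul]
  exact Finset.sum_eq_zero fun b hb =>
    hS.mul_eq_zero_of_mem_projAtoms (hT b hb) ha fun h => haT (h ▸ hb)

theorem sum_mul_eq_self_iff (hS : IsBooleanProjFamily S) {T : Finset (Module.End K V)}
    (hT : ∀ b ∈ T, b ∈ projAtoms S) {a : Module.End K V} (ha : a ∈ projAtoms S) :
    (∑ b ∈ T, b) * a = a ↔ a ∈ T := by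
  refine ⟨fun h => by_contra fun haT => ha.2.1 (h ▸ hS.sum_mul_eq_zero hT ha haT),
    fun haT => ?_⟩
  rw [Finset.sum_mul, Finset.sum_eq_single a, hS.isIdempotentElem a ha.1]
  · exact fun b hb hba => hS.mul_eq_zero_of_mem_projAtoms (hT b hb) ha hba
  · exact fun h => absurd haT h

theorem sum_mem (hS : IsBooleanProjFamily S) {T : Finset (Module.End K V)}
    (hT : ∀ b ∈ T, b ∈ projAtoms S) : ∑ b ∈ T, b ∈ S := by
  classical
  induction T using Finset.induction_on with
  | empty => simpa using hS.zero_mem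
  | insert a T haT ih =>
    have hTa : ∀ b ∈ T, b ∈ projAtoms S := fun b hb => hT b (Finset.mem_insert_of_mem hb)
    have ha := hT a (Finset.mem_insert_self a T)
    rw [Finset.sum_insert haT]
    refine hS.add_mem ha.1 (ih hTa) ?_
    rw [(hS.commute _ ha.1 _ (ih hTa)).eq]
    exact hS.sum_mul_eq_zero hTa ha haT

theorem eq_sum_projAtoms_below (hS : IsBooleanProjFamily S) [FiniteDimensional K V]
    {P : Module.End K V} (hP : P ∈ S) {T : Finset (Module.End K V)}
    (hT : ∀ a, a ∈ T ↔ a ∈ projAtoms S ∧ P * a = a) : P = ∑ a ∈ T, a := by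
  have hTS : ∀ a ∈ T, a ∈ projAtoms S := fun a ha => ((hT a).mp ha).1
  set Q := ∑ a ∈ T, a
  have hQ := hS.sum_mem hTS
  have hPQ : P * Q = Q := by
    rw [Finset.mul_sum]
    exact Finset.sum_congr rfl fun a ha => ((hT a).mp ha).2
  -- `P * (1 - Q)` lies below `P`, so an atom below it would belong to `T`
  have hR : P * (1 - Q) = 0 := by
    by_contra hR0
    obtain ⟨a, ha, hRa⟩ := hS.exists_mem_projAtoms_mul_eq
      (hS.mul_mem _ hP _ (hS.one_sub_mem _ hQ)) hR0
    have hPa : P * a = a := by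
      rw [← hRa, ← mul_assoc, ← mul_assoc, hS.isIdempotentElem P hP]
    have hQa : Q * a = a := (hS.sum_mul_eq_self_iff hTS ha).mpr ((hT a).mpr ⟨ha, hPa⟩)
    apply ha.2.1
    rw [← hRa, mul_assoc, sub_mul, one_mul, hQa, sub_self, mul_zero]
  rw [mul_sub, mul_one, hPQ, sub_eq_zero] at hR
  exact hR

theorem card_le_finrank_of_subset_projAtoms [FiniteDimensional K V]
    (hS : IsBooleanProjFamily S) {T : Finset (Module.End K V)}
    (hT : ∀ a ∈ T, a ∈ projAtoms S) : T.card ≤ finrank K V := by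
  choose v hv hv0 using fun a : T =>
    Module.End.exists_apply_eq_self_ne_zero (hS.isIdempotentElem a (hT a a.2).1) (hT a a.2).2.1
  -- applying the atom `b` to a combination of the `v a` isolates the coefficient of `v b`
  have hli : LinearIndependent K v := by
    rw [linearIndependent_iff']
    intro s g hg b hb
    have hb' := congrArg (b : Module.End K V) hg
    rw [map_sum, map_zero, Finset.sum_eq_single b, map_smul, hv] at hb'
    · exact (smul_eq_zero.mp hb').resolve_right (hv0 b)
    · intro a _ hab
      rw [map_smul, ← hv a, ← Module.End.mul_apply, hS.mul_eq_zero_of_mem_projAtoms (hT b b.2)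
        (hT a a.2) (Subtype.coe_ne_coe.mpr hab.symm), LinearMap.zero_apply, smul_zero]
    · exact fun h => absurd hb h
  have hcard := hli.fintype_card_le_finrank
  rwa [Fintype.card_coe] at hcard

theorem projAtoms_finite [FiniteDimensional K V] (hS : IsBooleanProjFamily S) :
    (projAtoms S).Finite := by
  by_contra h
  obtain ⟨T, hTS, hT⟩ := Set.Infinite.exists_subset_card_eq h (finrank K V + 1)
  have := hS.card_le_finrank_of_subset_projAtoms fun a ha => hTS ha
  omega

theorem finite_and_ncard_eq_two_pow [FiniteDimensional K V] (hS : IsBooleanProjFamily S) :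
    S.Finite ∧ ∃ m ≤ finrank K V, S.ncard = 2 ^ m := by
  classical
  set F := hS.projAtoms_finite.toFinset
  have hF : ∀ a, a ∈ F ↔ a ∈ projAtoms S := fun a => hS.projAtoms_finite.mem_toFinset
  have hFS : ∀ T ∈ F.powerset, ∀ a ∈ T, a ∈ projAtoms S :=
    fun T hT a ha => (hF a).mp (Finset.mem_powerset.mp hT ha)
  have himage : S = (F.powerset.image fun T => ∑ a ∈ T, a : Set (Module.End K V)) := by
    ext P
    refine ⟨fun hP => ?_, ?_⟩
    · refine Finset.mem_coe.mpr (Finset.mem_image.mpr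
        ⟨F.filter fun a => P * a = a, Finset.mem_powerset.mpr (Finset.filter_subset _ _), ?_⟩)
      exact (hS.eq_sum_projAtoms_below hP fun a => by simp [hF]).symm
    · intro hP
      obtain ⟨T, hT, rfl⟩ := Finset.mem_image.mp (Finset.mem_coe.mp hP)
      exact hS.sum_mem (hFS T hT)
  have hinj : Set.InjOn (fun T => ∑ a ∈ T, a) (F.powerset : Set (Finset (Module.End K V))) := by
    intro T hT T' hT' hTT'
    ext a
    by_cases ha : a ∈ projAtoms S
    · rw [← hS.sum_mul_eq_self_iff (hFS T hT) ha, ← hS.sum_mul_eq_self_iff (hFS T' hT') ha]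
      exact Iff.of_eq congr($hTT' * a = a)
    · exact iff_of_false (fun h => ha (hFS T hT a h)) (fun h => ha (hFS T' hT' a h))
  refine ⟨himage ▸ Finset.finite_toSet _, F.card,
    hS.card_le_finrank_of_subset_projAtoms fun a => (hF a).mp, ?_⟩
  rw [himage, Set.ncard_coe_finset, Finset.card_image_of_injOn hinj, Finset.card_powerset]

end IsBooleanProjFamily

end BooleanProjFamily

theorem isBooleanProjFamily_setOf_isBandProj (hX : IsPreRiesz X) :
    IsBooleanProjFamily {P : X →ₗ[ℝ] X | IsBandProj P} where
  isIdempotentElem _ hP := hP.isIdempotentElem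
  commute _ hP _ hQ := hP.commute hX hQ
  zero_mem := IsBandProj.zero
  mul_mem _ hP _ hQ := hP.mul hX hQ
  one_sub_mem _ hP := hP.one_sub

/-- On an `n`-dimensional pre-Riesz space the set of band projections is finite with
cardinality `2 ^ m` for some `m ≤ n`. -/
theorem stmt_18 (hX : IsPreRiesz X) [FiniteDimensional ℝ X] :
    {P : X →ₗ[ℝ] X | IsBandProj P}.Finite ∧
    ∃ m ≤ Module.finrank ℝ X, {P : X →ₗ[ℝ] X | IsBandProj P}.ncard = 2 ^ m :=
  (isBooleanProjFamily_setOf_isBandProj hX).finite_and_ncard_eq_two_pow
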